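/- For every n ≥ 1, n! · Σ_{T ∈ PT(n)} ∏_{v ∈ T} (1 - 1/h_v)^{h_v - 1} = (n-1)^{n-1}, where PT(n) is the set of plane trees with n vertices (for n = 1 the right-hand side is 0^0 = 1). -/

import Mathlib

/-- Plane trees: nonempty rooted trees whose subtrees at each vertex are linearly ordered. -/
inductive PTree : Type
  | node : List PTree → PTree

namespace PTree

mutual
/-- The number of vertices of a plane tree. -/
def size : PTree → ℕ
  | .node cs => sizeList cs + 1
/-- The total number of vertices of a plane forest (a list of plane trees). -/
def sizeList : List PTree → ℕ
  | [] => 0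
  | t :: ts => size t + sizeList ts
end

mutual
/-- The multiset of hook lengths of a plane tree: the hook length of a vertex
is the number of its descendants, counting the vertex itself. -/
def hooks : PTree → Multiset ℕ+
  | .node cs => ⟨sizeList cs + 1, Nat.succ_pos _⟩ ::ₘ hooksList cs
/-- The multiset of hook lengths of a plane forest. -/
def hooksList : List PTree → Multiset ℕ+
  | [] => 0
  | t :: ts => hooks t + hooksList ts
end

end PTree

/-! Deleting the root turns a plane tree with `m + 1` vertices into the forest of its subtrees,
and a nonempty forest splits into its first tree and the remaining forest. The root of a tree
with `n` vertices has weight `(1 - 1/n)^(n-1)`, so the weighted tree sums `a n` and forest sums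
`g m` satisfy `a (m + 1) = (m/(m+1))^m g m` and `g (m + 1) = ∑_{i+k=m} a (i + 1) g k`. By strong
induction `g m = (m+1)^(m-1)/m!` and `a (m + 1) = m^m/(m+1)!`; the inductive step is the Abel
identity `∑_{i+k=m} C(m+1,i+1) i^i (k+1)^(k-1) = (m+2)^m`, the value at `x = -1, y = 1` of the
binomial-type identity `A n (x + y) = ∑_{i+k=n} C(n,i) A i x A k y` for the Abel polynomials
`A n x = x (x + n)^(n-1)`. -/

open Finset
open scoped Nat

namespace Polynomial

variable {R : Type*} [CommRing R]

noncomputable def abelPoly : ℕ → R[X]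
  | 0 => 1
  | n + 1 => X * (X + (n + 1 : R[X])) ^ n

@[simp]
theorem abelPoly_zero : (abelPoly 0 : R[X]) = 1 := rfl

theorem derivative_abelPoly_succ (n : ℕ) :
    derivative (abelPoly (n + 1) : R[X]) = ((n + 1 : ℕ) : R[X]) * (abelPoly n).comp (X + 1) := by
  cases n with
  | zero => simp [abelPoly]
  | succ n =>
    simp only [abelPoly, derivative_mul, derivative_X, derivative_pow, derivative_add,
      derivative_natCast, derivative_one, mul_comp, pow_comp, add_comp, X_comp, natCast_comp,
      one_comp]
    push_cast
    simp only [map_add, map_one, map_natCast]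
    ring

theorem abelPoly_eval_zero {n : ℕ} (hn : n ≠ 0) : (abelPoly n : R[X]).eval 0 = 0 := by
  obtain ⟨n, rfl⟩ := Nat.exists_eq_succ_of_ne_zero hn
  simp [abelPoly]

theorem abelPoly_eval_one (n : ℕ) : (abelPoly n : R[X]).eval 1 = (n + 1 : R) ^ (n - 1) := by
  cases n with
  | zero => simp [abelPoly]
  | succ n => simp [abelPoly]; ring

theorem abelPoly_eval_neg_one {n : ℕ} (hn : n ≠ 0) :
    (abelPoly n : R[X]).eval (-1) = -((n - 1 : R) ^ (n - 1)) := by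
  obtain ⟨n, rfl⟩ := Nat.exists_eq_succ_of_ne_zero hn
  simp [abelPoly]

variable [IsAddTorsionFree R]

theorem eq_of_derivative_eq_of_eval_zero_eq {p q : R[X]} (hd : derivative p = derivative q)
    (h0 : p.eval 0 = q.eval 0) : p = q := by
  have hconst := eq_C_of_derivative_eq_zero (p := p - q) (by rw [derivative_sub, hd, sub_self])
  rw [← sub_eq_zero, hconst, coeff_zero_eq_eval_zero, eval_sub, h0, sub_self, C_0]

theorem abelPoly_comp_X_add_C (n : ℕ) (y : R) :
    (abelPoly n : R[X]).comp (X + C y) =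
      ∑ p ∈ antidiagonal n,
        (n.choose p.1 : R[X]) * abelPoly p.1 * C ((abelPoly p.2).eval y) := by
  induction n with
  | zero => simp [abelPoly]
  | succ n ih =>
    apply eq_of_derivative_eq_of_eval_zero_eq
    · have hshift : ((X : R[X]) + 1).comp (X + C y) = (X + C y).comp (X + 1) := by
        simp only [add_comp, X_comp, one_comp, C_comp]; ring
      rw [derivative_comp, derivative_abelPoly_succ, mul_comp, natCast_comp, comp_assoc, hshift,
        ← comp_assoc, ih, Nat.sum_antidiagonal_succ, sum_comp, mul_sum]
      simp only [abelPoly_zero, Nat.choose_zero_right, Nat.cast_one, one_mul, derivative_C,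
        zero_add, derivative_add, derivative_X, derivative_sum, add_zero]
      refine sum_congr rfl fun p _ => ?_
      rw [derivative_mul, derivative_C, mul_zero, add_zero, derivative_mul, derivative_natCast,
        zero_mul, zero_add, derivative_abelPoly_succ, mul_comp, mul_comp, natCast_comp, C_comp]
      have := congrArg (Nat.cast : ℕ → R[X]) (Nat.add_one_mul_choose_eq n p.1)
      push_cast at this ⊢
      linear_combination (abelPoly p.1).comp (X + 1) * C ((abelPoly p.2).eval y) * this
    · simp [Nat.sum_antidiagonal_succ, eval_finsetSum, abelPoly_eval_zero]

end Polynomial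

open Polynomial in
theorem sum_antidiagonal_choose_mul_pow_mul_pow {R : Type*} [CommRing R] [IsAddTorsionFree R]
    (m : ℕ) :
    ∑ p ∈ antidiagonal m,
        ((m + 1).choose (p.1 + 1) : R) * (p.1 : R) ^ p.1 * (p.2 + 1 : R) ^ (p.2 - 1) =
      (m + 2 : R) ^ m := by
  have h := congrArg (eval (-1)) (abelPoly_comp_X_add_C (R := R) (m + 1) 1)
  simp only [eval_comp, eval_add, eval_X, eval_C, neg_add_cancel,
    abelPoly_eval_zero m.succ_ne_zero, eval_finsetSum, eval_mul, eval_natCast,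
    Nat.sum_antidiagonal_succ, abelPoly_zero, eval_one, abelPoly_eval_one,
    abelPoly_eval_neg_one (Nat.succ_ne_zero _)] at h
  push_cast at h
  simp only [add_sub_cancel_right, Nat.choose_zero_right, Nat.cast_one, mul_one, one_mul, mul_neg,
    neg_mul, sum_neg_distrib] at h
  linear_combination h

namespace PTree

theorem size_pos (t : PTree) : 0 < t.size := by
  cases t; simp [size]

theorem node_injective : Function.Injective node := fun _ _ h => by injection h

open scoped Classical in
noncomputable def forestsOfSize : ℕ → Finset (List PTree)
  | 0 => {[]}
  | m + 1 => (antidiagonal m).attach.biUnion fun p =>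
      image₂ (fun cs ts => node cs :: ts) (forestsOfSize p.1.1) (forestsOfSize p.1.2)
decreasing_by all_goals have := HasAntidiagonal.mem_antidiagonal.mp p.2; omega

noncomputable def treesOfSize : ℕ → Finset PTree
  | 0 => ∅
  | m + 1 => (forestsOfSize m).map ⟨node, node_injective⟩

theorem mem_forestsOfSize {m : ℕ} {ts : List PTree} :
    ts ∈ forestsOfSize m ↔ sizeList ts = m := by
  induction m using Nat.strong_induction_on generalizing ts with
  | _ m ih =>
  cases m with
  | zero =>
    cases ts with
    | nil => simp [forestsOfSize, sizeList]
    | cons t ts => simp [forestsOfSize, sizeList, (size_pos t).ne']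
  | succ m =>
    rw [forestsOfSize]
    simp only [mem_biUnion, mem_attach, true_and, mem_image₂, Subtype.exists,
      HasAntidiagonal.mem_antidiagonal]
    constructor
    · rintro ⟨⟨i, k⟩, hik, cs, hcs, ts, hts, rfl⟩
      rw [ih i (by omega)] at hcs
      rw [ih k (by omega)] at hts
      simp only [sizeList, size, hcs, hts]
      omega
    · intro h
      match ts, h with
      | node cs :: ts, h =>
        simp only [sizeList, size] at h
        exact ⟨(sizeList cs, sizeList ts), by omega, cs, (ih _ (by omega)).2 rfl,
          ts, (ih _ (by omega)).2 rfl, rfl⟩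

theorem mem_treesOfSize {n : ℕ} {t : PTree} : t ∈ treesOfSize n ↔ t.size = n := by
  match n, t with
  | 0, t => simp [treesOfSize, (size_pos t).ne']
  | m + 1, node cs => simp [treesOfSize, mem_forestsOfSize, size]

section HookProd

variable {M : Type*} [CommMonoid M] (f : ℕ+ → M)

def hookProd (t : PTree) : M := (t.hooks.map f).prod

def forestHookProd (ts : List PTree) : M := ((hooksList ts).map f).prod

@[simp]
theorem forestHookProd_nil : forestHookProd f [] = 1 := by
  simp [forestHookProd, hooksList]

@[simp]
theorem forestHookProd_cons (t : PTree) (ts : List PTree) :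
    forestHookProd f (t :: ts) = hookProd f t * forestHookProd f ts := by
  simp [forestHookProd, hookProd, hooksList]

theorem hookProd_node (cs : List PTree) :
    hookProd f (node cs) = f (sizeList cs).succPNat * forestHookProd f cs :=
  (congrArg Multiset.prod (Multiset.map_cons f _ _)).trans (Multiset.prod_cons _ _)

end HookProd

section HookSum

variable {R : Type*} [CommSemiring R] (f : ℕ+ → R)

theorem sum_treesOfSize_succ (m : ℕ) :
    ∑ t ∈ treesOfSize (m + 1), hookProd f t =
      f m.succPNat * ∑ ts ∈ forestsOfSize m, forestHookProd f ts := by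
  rw [treesOfSize, sum_map, mul_sum]
  refine sum_congr rfl fun cs hcs => ?_
  rw [Function.Embedding.coeFn_mk, hookProd_node, mem_forestsOfSize.1 hcs]

theorem sum_forestsOfSize_succ (m : ℕ) :
    ∑ ts ∈ forestsOfSize (m + 1), forestHookProd f ts =
      ∑ p ∈ antidiagonal m, (∑ t ∈ treesOfSize (p.1 + 1), hookProd f t) *
        ∑ ts ∈ forestsOfSize p.2, forestHookProd f ts := by
  classical
  rw [forestsOfSize, sum_biUnion, ← sum_attach (antidiagonal m)]
  · refine sum_congr rfl fun p _ => ?_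
    rw [← image_uncurry_product, sum_image, sum_product, treesOfSize, sum_map, sum_mul_sum]
    · simp
    · rintro ⟨cs, ts⟩ - ⟨cs', ts'⟩ - h
      simp only [Function.uncurry_apply_pair, List.cons.injEq, node.injEq] at h
      rw [h.1, h.2]
  · intro p _ q _ hpq
    refine disjoint_left.2 ?_
    simp only [mem_image₂, mem_forestsOfSize]
    rintro _ ⟨cs, hcs, ts, -, rfl⟩ ⟨cs', hcs', ts', -, h⟩
    simp only [List.cons.injEq, node.injEq] at h
    exact hpq (Subtype.ext ((HasAntidiagonal.antidiagonal_congr p.2 q.2).2 (hcs ▸ h.1 ▸ hcs')))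

end HookSum

theorem finsum_size_eq_sum_treesOfSize {M : Type*} [AddCommMonoid M] (g : PTree → M) (n : ℕ) :
    ∑ᶠ t : {t : PTree // t.size = n}, g t = ∑ t ∈ treesOfSize n, g t := by
  rw [finsum_subtype_eq_finsum_cond]
  exact finsum_cond_eq_sum_of_cond_iff g fun _ => mem_treesOfSize.symm

noncomputable def hookWeight (h : ℕ+) : ℚ := (1 - 1 / (h : ℚ)) ^ ((h : ℕ) - 1)

theorem hookWeight_succPNat_mul_pow (j : ℕ) :
    hookWeight j.succPNat * ((j : ℚ) + 1) ^ (j - 1) = (j : ℚ) ^ j / (j + 1) := by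
  have hj : (j : ℚ) + 1 ≠ 0 := by positivity
  rw [hookWeight, Nat.succPNat_coe, Nat.succ_sub_one, Nat.cast_succ,
    show 1 - 1 / ((j : ℚ) + 1) = j / (j + 1) by field_simp; ring, div_pow]
  cases j with
  | zero => simp
  | succ j => rw [Nat.add_sub_cancel]; field_simp; ring

theorem sum_treesOfSize_succ_hookWeight {m : ℕ}
    (h : ∑ ts ∈ forestsOfSize m, forestHookProd hookWeight ts =
      ((m : ℚ) + 1) ^ (m - 1) / m !) :
    ∑ t ∈ treesOfSize (m + 1), hookProd hookWeight t = (m : ℚ) ^ m / (m + 1)! := by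
  rw [sum_treesOfSize_succ, h, ← mul_div_assoc, hookWeight_succPNat_mul_pow, Nat.factorial_succ]
  push_cast
  rw [div_div]

theorem sum_forestsOfSize_hookWeight (m : ℕ) :
    ∑ ts ∈ forestsOfSize m, forestHookProd hookWeight ts = ((m : ℚ) + 1) ^ (m - 1) / m ! := by
  induction m using Nat.strong_induction_on with
  | _ m ih =>
  cases m with
  | zero => simp [forestsOfSize]
  | succ m =>
    have hterm : ∀ p ∈ antidiagonal m,
        (∑ t ∈ treesOfSize (p.1 + 1), hookProd hookWeight t) *
            ∑ ts ∈ forestsOfSize p.2, forestHookProd hookWeight ts =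
          ((m + 1).choose (p.1 + 1) : ℚ) * (p.1 : ℚ) ^ p.1 * (p.2 + 1 : ℚ) ^ (p.2 - 1) /
            (m + 1)! := by
      intro p hp
      have hp : p.2 + (p.1 + 1) = m + 1 := by rw [HasAntidiagonal.mem_antidiagonal] at hp; omega
      have hchoose := Nat.add_choose_mul_factorial_mul_factorial p.2 (p.1 + 1)
      rw [hp] at hchoose
      have hchoose_ne : ((m + 1).choose (p.1 + 1) : ℚ) ≠ 0 :=
        Nat.cast_ne_zero.2 (Nat.choose_pos (by omega)).ne'
      rw [sum_treesOfSize_succ_hookWeight (ih p.1 (by omega)), ih p.2 (by omega),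
        ← hchoose]
      push_cast
      field_simp
    rw [sum_forestsOfSize_succ, sum_congr rfl hterm, ← sum_div,
      sum_antidiagonal_choose_mul_pow_mul_pow]
    push_cast
    ring_nf

end PTree

open PTree in
/-- A hook length formula for plane trees. -/
theorem hook_formula_plane_trees_power (n : ℕ) (hn : 1 ≤ n) :
    (n.factorial : ℚ) *
      ∑ᶠ T : {t : PTree // t.size = n},
        ((T : PTree).hooks.map fun (h : ℕ+) => (1 - 1 / (h : ℚ)) ^ ((h : ℕ) - 1)).prod
    = ((n : ℚ) - 1) ^ (n - 1) := by
  obtain ⟨m, rfl⟩ := Nat.exists_eq_add_of_le' hn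
  calc ((m + 1)! : ℚ) * ∑ᶠ T : {t : PTree // t.size = m + 1}, hookProd hookWeight (T : PTree)
      = (m + 1)! * ((m : ℚ) ^ m / (m + 1)!) := by
        rw [finsum_size_eq_sum_treesOfSize,
          sum_treesOfSize_succ_hookWeight (sum_forestsOfSize_hookWeight m)]
    _ = ((m + 1 : ℕ) - 1 : ℚ) ^ (m + 1 - 1) := by
        rw [mul_div_cancel₀ _ (by positivity)]
        push_cast
        simp
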